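/- arXiv:1912.00653 — 4 statements merged into one kernel-verified Lean document; each statement's English description precedes it below -/
import Mathlib

section
/- Let X be a nonempty finite set of points in ℝ^d and let c₁ be a random point of X chosen according to a probability distribution q such that q(x) ≤ ((1+ε₂)/(1-ε₁))·(1/|X|) for all x ∈ X. Then the expected 1-means cost E[∑_{p∈X} ||p-c₁||²] ≤ (2(1+ε₂)/(1-ε₁))·OPT₁(X). -/
theorem noisy_uniform_sampling (d : ℕ) (X : Finset (EuclideanSpace ℝ (Fin d)))
    (hX : X.Nonempty) (ε₁ ε₂ : ℝ) (hε₁ : 0 ≤ ε₁) (hε₁' : ε₁ < 1) (hε₂ : 0 ≤ ε₂)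
    (q : EuclideanSpace ℝ (Fin d) → ℝ)
    (hq0 : ∀ x ∈ X, 0 ≤ q x) (hqsum : ∑ x ∈ X, q x = 1)
    (hqub : ∀ x ∈ X, q x ≤ (1 + ε₂) / ((1 - ε₁) * (X.card : ℝ))) :
    ∑ c ∈ X, q c * ∑ p ∈ X, ‖p - c‖ ^ 2 ≤
      (2 * (1 + ε₂) / (1 - ε₁)) *
        ∑ p ∈ X, ‖p - ((X.card : ℝ)⁻¹ • ∑ y ∈ X, y)‖ ^ 2 := by
  have hcard : (0:ℝ) < (X.card : ℝ) := by
    exact_mod_cast Finset.card_pos.mpr hX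
  set μ : EuclideanSpace ℝ (Fin d) := (X.card : ℝ)⁻¹ • ∑ y ∈ X, y with hμ
  set A : ℝ := ∑ p ∈ X, ‖p - μ‖ ^ 2 with hA
  have hApos : 0 ≤ A := Finset.sum_nonneg fun p _ => by positivity
  have hsum0 : ∑ p ∈ X, (p - μ) = 0 := by
    rw [Finset.sum_sub_distrib, Finset.sum_const, sub_eq_zero, hμ,
      ← Nat.cast_smul_eq_nsmul ℝ, smul_smul, mul_inv_cancel₀ (ne_of_gt hcard), one_smul]
  have key : ∀ c ∈ X, ∑ p ∈ X, ‖p - c‖ ^ 2 = A + (X.card : ℝ) * ‖μ - c‖ ^ 2 := by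
    intro c _
    have h1 : ∀ p : EuclideanSpace ℝ (Fin d),
        ‖p - c‖ ^ 2 = ‖p - μ‖ ^ 2 + 2 * inner ℝ (p - μ) (μ - c) + ‖μ - c‖ ^ 2 := by
      intro p
      rw [show p - c = (p - μ) + (μ - c) by abel]
      exact norm_add_sq_real _ _
    calc ∑ p ∈ X, ‖p - c‖ ^ 2
        = ∑ p ∈ X, (‖p - μ‖ ^ 2 + 2 * inner ℝ (p - μ) (μ - c) + ‖μ - c‖ ^ 2) := by
          exact Finset.sum_congr rfl fun p _ => h1 p
      _ = A + 2 * (inner ℝ (∑ p ∈ X, (p - μ)) (μ - c) : ℝ)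
            + (X.card : ℝ) * ‖μ - c‖ ^ 2 := by
          rw [Finset.sum_add_distrib, Finset.sum_add_distrib, Finset.sum_const,
            ← Finset.mul_sum, ← sum_inner, nsmul_eq_mul]
      _ = A + (X.card : ℝ) * ‖μ - c‖ ^ 2 := by
          rw [hsum0, inner_zero_left]; ring
  set B : ℝ := (1 + ε₂) / (1 - ε₁) with hB
  have hε : (0:ℝ) < 1 - ε₁ := by linarith
  have hB1 : 1 ≤ B := by
    rw [hB, le_div_iff₀ hε]; linarith
  have hB0 : 0 ≤ B := by linarith
  have hAC : ∑ c ∈ X, ‖μ - c‖ ^ 2 = A := by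
    rw [hA]
    exact Finset.sum_congr rfl fun c _ => by rw [norm_sub_rev]
  have step1 : ∑ c ∈ X, q c * ∑ p ∈ X, ‖p - c‖ ^ 2 ≤ A + B * A := by
    have : ∑ c ∈ X, q c * ∑ p ∈ X, ‖p - c‖ ^ 2
        = A + (X.card : ℝ) * ∑ c ∈ X, q c * ‖μ - c‖ ^ 2 := by
      calc ∑ c ∈ X, q c * ∑ p ∈ X, ‖p - c‖ ^ 2
          = ∑ c ∈ X, (q c * A + (X.card : ℝ) * (q c * ‖μ - c‖ ^ 2)) := by
            refine Finset.sum_congr rfl fun c hc => ?_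
            rw [key c hc]; ring
        _ = (∑ c ∈ X, q c) * A + ∑ c ∈ X, (X.card : ℝ) * (q c * ‖μ - c‖ ^ 2) := by
            rw [Finset.sum_add_distrib, Finset.sum_mul]
        _ = A + (X.card : ℝ) * ∑ c ∈ X, q c * ‖μ - c‖ ^ 2 := by
            rw [hqsum, one_mul, ← Finset.mul_sum]
    rw [this]
    have h2 : (X.card : ℝ) * ∑ c ∈ X, q c * ‖μ - c‖ ^ 2 ≤ B * A := by
      have : ∑ c ∈ X, q c * ‖μ - c‖ ^ 2 ≤ ∑ c ∈ X, (B / (X.card : ℝ)) * ‖μ - c‖ ^ 2 := by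
        refine Finset.sum_le_sum fun c hc => ?_
        have hub := hqub c hc
        have : q c ≤ B / (X.card : ℝ) := by
          rw [hB, div_div]; exact hub
        exact mul_le_mul_of_nonneg_right this (by positivity)
      calc (X.card : ℝ) * ∑ c ∈ X, q c * ‖μ - c‖ ^ 2
          ≤ (X.card : ℝ) * ∑ c ∈ X, (B / (X.card : ℝ)) * ‖μ - c‖ ^ 2 :=
            mul_le_mul_of_nonneg_left this (le_of_lt hcard)
        _ = B * A := by
            rw [← Finset.mul_sum, hAC,
              show (X.card : ℝ) * (B / (X.card : ℝ) * A) = B * A * ((X.card:ℝ) / (X.card:ℝ)) from by ring,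
              div_self (ne_of_gt hcard), mul_one]
    linarith
  have step2 : A + B * A ≤ 2 * B * A := by nlinarith
  calc ∑ c ∈ X, q c * ∑ p ∈ X, ‖p - c‖ ^ 2 ≤ A + B * A := step1
    _ ≤ 2 * B * A := step2
    _ = 2 * (1 + ε₂) / (1 - ε₁) * A := by rw [hB]; ring
end

section
/- Let X ⊂ ℝ^d be a nonempty finite cluster, C ⊂ ℝ^d a nonempty finite set of centers with Φ(X,C) = ∑_{p∈X} Φ(p,C) > 0, and let z be a random point of X sampled according to a distribution q with q(x) ≤ ((1+ε₂)/(1-ε₁))·Φ(x,C)/Φ(X,C) for all x ∈ X. Then E[∑_{p∈X} min(Φ(p,C), ||p-z||²)] ≤ (8(1+ε₂)/(1-ε₁))·OPT₁(X). -/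
/-!
For any `z, p` the relaxed triangle inequality gives `Φ(z) ≤ 2‖z - p‖² + 2Φ(p)`; averaging over
`p ∈ X` yields `|X| Φ(z) ≤ 2 ∑ₚ ‖p - z‖² + 2 Φ(X)`. Multiplying by `min(Φ(p), ‖p - z‖²)` and using
the `Φ(p)` branch of the minimum against the first term and the `‖p - z‖²` branch against the
second gives `|X| Φ(z) ∑ₚ min(Φ(p), ‖p - z‖²) ≤ 4 Φ(X) ∑ₚ ‖p - z‖²`. Summing over `z` with
`∑_z ∑ₚ ‖p - z‖² = 2 |X| OPT₁(X)` shows that exact D²-sampling costs at most `8 OPT₁(X)` in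
expectation; a distribution dominated by `(1 + ε₂)/(1 - ε₁)` times it costs at most that factor
more.
-/

open Finset

section NormedAddCommGroup

variable {E : Type*} [NormedAddCommGroup E]

/-- The potential `Φ(x, C)` of `x` with respect to the centers `C`. -/
noncomputable def nearestSqDist (C : Finset E) (hC : C.Nonempty) (x : E) : ℝ :=
  C.inf' hC fun c => ‖x - c‖ ^ 2

variable (C : Finset E) (hC : C.Nonempty)

lemma nearestSqDist_nonneg (x : E) : 0 ≤ nearestSqDist C hC x :=
  le_inf' hC _ fun _ _ => sq_nonneg _

lemma nearestSqDist_le_two_mul_norm_sub_sq_add (x y : E) :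
    nearestSqDist C hC x ≤ 2 * ‖x - y‖ ^ 2 + 2 * nearestSqDist C hC y := by
  obtain ⟨c, hc, hyc⟩ := C.exists_mem_eq_inf' hC fun c => ‖y - c‖ ^ 2
  calc nearestSqDist C hC x ≤ ‖(x - y) + (y - c)‖ ^ 2 := by
        rw [sub_add_sub_cancel]; exact C.inf'_le _ hc
    _ ≤ (‖x - y‖ + ‖y - c‖) ^ 2 := by gcongr; exact norm_add_le _ _
    _ ≤ 2 * ‖x - y‖ ^ 2 + 2 * ‖y - c‖ ^ 2 := by nlinarith [sq_nonneg (‖x - y‖ - ‖y - c‖)]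
    _ = 2 * ‖x - y‖ ^ 2 + 2 * nearestSqDist C hC y := by rw [nearestSqDist, hyc]

lemma card_mul_nearestSqDist_le (X : Finset E) (z : E) :
    #X * nearestSqDist C hC z ≤
      2 * ∑ p ∈ X, ‖p - z‖ ^ 2 + 2 * ∑ p ∈ X, nearestSqDist C hC p := by
  calc #X * nearestSqDist C hC z = ∑ _p ∈ X, nearestSqDist C hC z := by
        rw [sum_const, nsmul_eq_mul]
    _ ≤ ∑ p ∈ X, (2 * ‖p - z‖ ^ 2 + 2 * nearestSqDist C hC p) :=
        sum_le_sum fun p _ => norm_sub_rev p z ▸ nearestSqDist_le_two_mul_norm_sub_sq_add C hC z p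
    _ = 2 * ∑ p ∈ X, ‖p - z‖ ^ 2 + 2 * ∑ p ∈ X, nearestSqDist C hC p := by
        rw [sum_add_distrib, ← mul_sum, ← mul_sum]

lemma card_mul_nearestSqDist_mul_sum_min_le (X : Finset E) (z : E) :
    #X * nearestSqDist C hC z * ∑ p ∈ X, min (nearestSqDist C hC p) (‖p - z‖ ^ 2) ≤
      4 * (∑ p ∈ X, nearestSqDist C hC p) * ∑ p ∈ X, ‖p - z‖ ^ 2 := by
  set T := ∑ p ∈ X, ‖p - z‖ ^ 2
  set F := ∑ p ∈ X, nearestSqDist C hC p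
  have hT : 0 ≤ T := sum_nonneg fun p _ => sq_nonneg _
  have hF : 0 ≤ F := sum_nonneg fun p _ => nearestSqDist_nonneg C hC p
  have hz := card_mul_nearestSqDist_le C hC X z
  calc #X * nearestSqDist C hC z * ∑ p ∈ X, min (nearestSqDist C hC p) (‖p - z‖ ^ 2)
      = ∑ p ∈ X, #X * nearestSqDist C hC z * min (nearestSqDist C hC p) (‖p - z‖ ^ 2) :=
        mul_sum _ _ _
    _ ≤ ∑ p ∈ X, (2 * T * nearestSqDist C hC p + 2 * F * ‖p - z‖ ^ 2) := by
        refine sum_le_sum fun p _ => ?_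
        have hmin := le_min (nearestSqDist_nonneg C hC p) (sq_nonneg ‖p - z‖)
        calc _ ≤ (2 * T + 2 * F) * min (nearestSqDist C hC p) (‖p - z‖ ^ 2) := by gcongr
          _ ≤ _ := by
            rw [add_mul]
            gcongr
            exacts [min_le_left _ _, min_le_right _ _]
    _ = 4 * F * T := by rw [sum_add_distrib, ← mul_sum, ← mul_sum]; ring

end NormedAddCommGroup

section InnerProductSpace

variable {E : Type*} [NormedAddCommGroup E] [InnerProductSpace ℝ E]

lemma sum_sub_mean_eq_zero (s : Finset E) : ∑ p ∈ s, (p - (#s : ℝ)⁻¹ • ∑ y ∈ s, y) = 0 := by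
  rcases s.eq_empty_or_nonempty with rfl | hs
  · simp
  rw [sum_sub_distrib, sum_const, ← Nat.cast_smul_eq_nsmul ℝ, smul_smul,
    mul_inv_cancel₀ (by simpa using hs.ne_empty), one_smul, sub_self]

lemma sum_sum_norm_sub_sq_eq (s : Finset E) :
    ∑ z ∈ s, ∑ p ∈ s, ‖p - z‖ ^ 2 = 2 * #s * ∑ p ∈ s, ‖p - (#s : ℝ)⁻¹ • ∑ y ∈ s, y‖ ^ 2 := by
  set μ := (#s : ℝ)⁻¹ • ∑ y ∈ s, y
  have hexpand : ∀ z p : E, ‖p - z‖ ^ 2 =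
      ‖p - μ‖ ^ 2 - 2 * inner ℝ (p - μ) (z - μ) + ‖z - μ‖ ^ 2 := fun z p => by
    rw [← norm_sub_sq_real, sub_sub_sub_cancel_right]
  have hμ : ∑ p ∈ s, (p - μ) = 0 := sum_sub_mean_eq_zero s
  have hcross : ∑ z ∈ s, ∑ p ∈ s, inner ℝ (p - μ) (z - μ) = 0 := by
    simp only [← sum_inner, hμ, inner_zero_left, sum_const_zero]
  rw [sum_congr rfl fun z _ => sum_congr rfl fun p _ => hexpand z p]
  simp only [sum_add_distrib, sum_sub_distrib, ← mul_sum, hcross, sum_const, nsmul_eq_mul]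
  ring

lemma sum_nearestSqDist_mul_sum_min_le (C : Finset E) (hC : C.Nonempty) (X : Finset E) :
    ∑ z ∈ X, nearestSqDist C hC z * ∑ p ∈ X, min (nearestSqDist C hC p) (‖p - z‖ ^ 2) ≤
      8 * (∑ p ∈ X, nearestSqDist C hC p) * ∑ p ∈ X, ‖p - (#X : ℝ)⁻¹ • ∑ y ∈ X, y‖ ^ 2 := by
  rcases X.eq_empty_or_nonempty with rfl | hX
  · simp
  refine le_of_mul_le_mul_left ?_ (show (0 : ℝ) < #X by exact_mod_cast hX.card_pos)
  calc #X * ∑ z ∈ X, nearestSqDist C hC z * ∑ p ∈ X, min (nearestSqDist C hC p) (‖p - z‖ ^ 2)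
      = ∑ z ∈ X, #X * nearestSqDist C hC z *
          ∑ p ∈ X, min (nearestSqDist C hC p) (‖p - z‖ ^ 2) := by
        rw [mul_sum]; simp only [mul_assoc]
    _ ≤ ∑ z ∈ X, 4 * (∑ p ∈ X, nearestSqDist C hC p) * ∑ p ∈ X, ‖p - z‖ ^ 2 :=
        sum_le_sum fun z _ => card_mul_nearestSqDist_mul_sum_min_le C hC X z
    _ = #X * (8 * (∑ p ∈ X, nearestSqDist C hC p) *
          ∑ p ∈ X, ‖p - (#X : ℝ)⁻¹ • ∑ y ∈ X, y‖ ^ 2) := by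
        rw [← mul_sum, sum_sum_norm_sub_sq_eq]; ring

end InnerProductSpace

theorem noisy_d2_sampling_general (d : ℕ) (X C : Finset (EuclideanSpace ℝ (Fin d)))
    (hC : C.Nonempty) (ε₁ ε₂ : ℝ)
    (hε₁' : ε₁ < 1) (hε₂ : 0 ≤ ε₂)
    (hΦpos : 0 < ∑ p ∈ X, (C.inf' hC fun c => ‖p - c‖ ^ 2))
    (q : EuclideanSpace ℝ (Fin d) → ℝ)
    (hqub : ∀ x ∈ X, q x ≤ ((1 + ε₂) / (1 - ε₁)) *
      (C.inf' hC fun c => ‖x - c‖ ^ 2) /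
        ∑ p ∈ X, (C.inf' hC fun c => ‖p - c‖ ^ 2)) :
    ∑ z ∈ X, q z *
        ∑ p ∈ X, min (C.inf' hC fun c => ‖p - c‖ ^ 2) (‖p - z‖ ^ 2) ≤
      (8 * (1 + ε₂) / (1 - ε₁)) *
        ∑ p ∈ X, ‖p - ((X.card : ℝ)⁻¹ • ∑ y ∈ X, y)‖ ^ 2 := by
  set Φ := nearestSqDist C hC
  set OPT := ∑ p ∈ X, ‖p - (#X : ℝ)⁻¹ • ∑ y ∈ X, y‖ ^ 2
  set α := (1 + ε₂) / (1 - ε₁) with hα_def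
  have hΦX : 0 < ∑ p ∈ X, Φ p := hΦpos
  have hα : 0 ≤ α := div_nonneg (by linarith) (by linarith)
  calc ∑ z ∈ X, q z * ∑ p ∈ X, min (Φ p) (‖p - z‖ ^ 2)
      ≤ ∑ z ∈ X, α * Φ z / (∑ p ∈ X, Φ p) * ∑ p ∈ X, min (Φ p) (‖p - z‖ ^ 2) :=
        sum_le_sum fun z hz => mul_le_mul_of_nonneg_right (hqub z hz)
          (sum_nonneg fun p _ => le_min (nearestSqDist_nonneg C hC p) (sq_nonneg _))
    _ = α / (∑ p ∈ X, Φ p) * ∑ z ∈ X, Φ z * ∑ p ∈ X, min (Φ p) (‖p - z‖ ^ 2) := by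
        rw [mul_sum]; congr! 1 with z; ring
    _ ≤ α / (∑ p ∈ X, Φ p) * (8 * (∑ p ∈ X, Φ p) * OPT) := by
        gcongr; exact sum_nearestSqDist_mul_sum_min_le C hC X
    _ = 8 * α * OPT := by field_simp [hΦX.ne']
    _ = 8 * (1 + ε₂) / (1 - ε₁) * OPT := by rw [hα_def, mul_div_assoc]

theorem noisy_d2_sampling (d : ℕ) (X C : Finset (EuclideanSpace ℝ (Fin d)))
    (hX : X.Nonempty) (hC : C.Nonempty) (ε₁ ε₂ : ℝ)
    (hε₁ : 0 ≤ ε₁) (hε₁' : ε₁ < 1) (hε₂ : 0 ≤ ε₂)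
    (hΦpos : 0 < ∑ p ∈ X, (C.inf' hC fun c => ‖p - c‖ ^ 2))
    (q : EuclideanSpace ℝ (Fin d) → ℝ)
    (hq0 : ∀ x ∈ X, 0 ≤ q x) (hqsum : ∑ x ∈ X, q x = 1)
    (hqub : ∀ x ∈ X, q x ≤ ((1 + ε₂) / (1 - ε₁)) *
      (C.inf' hC fun c => ‖x - c‖ ^ 2) /
        ∑ p ∈ X, (C.inf' hC fun c => ‖p - c‖ ^ 2)) :
    ∑ z ∈ X, q z *
        ∑ p ∈ X, min (C.inf' hC fun c => ‖p - c‖ ^ 2) (‖p - z‖ ^ 2) ≤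
      (8 * (1 + ε₂) / (1 - ε₁)) *
        ∑ p ∈ X, ‖p - ((X.card : ℝ)⁻¹ • ∑ y ∈ X, y)‖ ^ 2 :=
  noisy_d2_sampling_general d X C hC ε₁ ε₂ hε₁' hε₂ hΦpos q hqub
end

section
/- Consider the instance X ⊂ ℝ^k consisting of k copies of each unit vector v_1,…,v_{k-1}, (k-1) copies of v_k, and one copy of o = (1/k,…,1/k). The clustering whose clusters are the points at v_1,…,v_{k-1} (each cluster costing 0) together with the cluster {(k-1) copies of v_k, o} has k-means cost at most (k-1)/k, hence OPT_k(X) ≤ (k-1)/k. -/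
open Finset

section CenterCost

variable {E : Type*} [SeminormedAddCommGroup E]

theorem Finset.inf'_norm_sub_sq_eq_zero_of_mem {C : Finset E} (hC : C.Nonempty) {x : E}
    (hx : x ∈ C) : C.inf' hC (fun c => ‖x - c‖ ^ 2) = 0 :=
  le_antisymm ((C.inf'_le _ hx).trans_eq (by simp)) (C.le_inf' hC _ fun _ _ => sq_nonneg _)

theorem Multiset.sum_map_inf'_norm_sub_sq_add_singleton_le (C : Finset E) (hC : C.Nonempty)
    {X : Multiset E} (hX : ∀ x ∈ X, x ∈ C) (y : E) {c : E} (hc : c ∈ C) :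
    ((X + {y}).map fun x => C.inf' hC fun c => ‖x - c‖ ^ 2).sum ≤ ‖y - c‖ ^ 2 := by
  have hX0 : (X.map fun x => C.inf' hC fun c => ‖x - c‖ ^ 2).sum = 0 :=
    Multiset.sum_eq_zero <| Multiset.forall_mem_map_iff.mpr fun x hx =>
      C.inf'_norm_sub_sq_eq_zero_of_mem hC (hX x hx)
  rw [Multiset.map_add, Multiset.sum_add, hX0, zero_add, Multiset.map_singleton,
    Multiset.sum_singleton]
  exact C.inf'_le _ hc

end CenterCost

section EuclideanSpace

variable {ι : Type*} [Fintype ι]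

theorem EuclideanSpace.norm_sub_single_one_sq [DecidableEq ι] (x : EuclideanSpace ℝ ι)
    (j : ι) :
    ‖x - EuclideanSpace.single j (1 : ℝ)‖ ^ 2 = ‖x‖ ^ 2 - 2 * x j + 1 := by
  rw [norm_sub_sq_real, EuclideanSpace.inner_single_right]
  simp

theorem EuclideanSpace.norm_const_sq (a : ℝ) :
    ‖(EuclideanSpace.equiv ι ℝ).symm (fun _ => a)‖ ^ 2 = Fintype.card ι * a ^ 2 := by
  rw [EuclideanSpace.real_norm_sq_eq]
  simp

end EuclideanSpace

theorem lower_bound_instance_opt (k : ℕ) (hk : 2 ≤ k) :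
    ∃ (C : Finset (EuclideanSpace ℝ (Fin k))) (hC : C.Nonempty),
      C.card = k ∧
      Multiset.sum
        (Multiset.map (fun x => C.inf' hC fun c => ‖x - c‖ ^ 2)
          ((((Finset.univ : Finset (Fin k)).val.bind fun i : Fin k =>
              Multiset.replicate (if (i : ℕ) = k - 1 then k - 1 else k)
                (EuclideanSpace.single i (1 : ℝ))) +
            {((EuclideanSpace.equiv (Fin k) ℝ).symm fun _ => 1 / (k : ℝ))}))) ≤
        ((k : ℝ) - 1) / k := by
  have hk0 : k ≠ 0 := by omega
  set C := univ.image fun i : Fin k => EuclideanSpace.single i (1 : ℝ)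
  have hsingle_mem (i : Fin k) : EuclideanSpace.single i (1 : ℝ) ∈ C :=
    mem_image_of_mem _ (mem_univ i)
  refine ⟨C, ⟨_, hsingle_mem ⟨0, by omega⟩⟩, ?_, ?_⟩
  · rw [card_image_of_injective _ EuclideanSpace.orthonormal_single.linearIndependent.injective,
      card_univ, Fintype.card_fin]
  refine (Multiset.sum_map_inf'_norm_sub_sq_add_singleton_le _ _ ?_ _
    (hsingle_mem ⟨k - 1, by omega⟩)).trans_eq ?_
  · intro x hx
    obtain ⟨i, -, hx⟩ := Multiset.mem_bind.mp hx
    exact Multiset.eq_of_mem_replicate hx ▸ hsingle_mem i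
  rw [EuclideanSpace.norm_sub_single_one_sq, EuclideanSpace.norm_const_sq]
  simp only [Fintype.card_fin, PiLp.continuousLinearEquiv_symm_apply]
  field_simp
  ring
end

section
/- Consider the instance X ⊂ ℝ^k consisting of k copies of each of v_1,…,v_{k-1}, (k-1) copies of v_k, and one copy of o = (1/k,…,1/k). Any set C of k centers from X that contains the point o has k-means cost Φ(X,C) ≥ (k-1)²/k. -/
/-!
Some standard basis vector `v_j` is missing from `C`, since `o` takes one of the `k` slots.
All other candidate centres lie at squared distance `2` (other vertices) or `1 - 1/k`
(the barycentre `o`) from `v_j`, so each of the at least `k - 1` copies of `v_j` in `X`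
costs at least `1 - 1/k`.
-/

open Finset Function

namespace Multiset

variable {α β : Type*} [AddCommMonoid β] [PartialOrder β] [IsOrderedAddMonoid β]

lemma nsmul_le_sum_map_of_replicate_le {X : Multiset α} {f : α → β} {n : ℕ} {a : α}
    (hX : replicate n a ≤ X) (hf : ∀ x ∈ X, 0 ≤ f x) : n • f a ≤ (X.map f).sum := by
  obtain ⟨u, rfl⟩ := le_iff_exists_add.1 hX
  rw [map_add, sum_add, map_replicate, sum_replicate]
  exact le_add_of_nonneg_right (sum_nonneg fun y hy => by
    obtain ⟨x, hx, rfl⟩ := mem_map.1 hy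
    exact hf x (mem_add.2 (Or.inr hx)))

lemma eq_or_exists_eq_of_mem_bind_replicate_add_singleton {ι : Type*} {s : Multiset ι}
    {n : ι → ℕ} {v : ι → α} {o x : α}
    (hx : x ∈ (s.bind fun i => replicate (n i) (v i)) + {o}) : x = o ∨ ∃ i, x = v i := by
  simp only [mem_add, mem_bind, mem_replicate, mem_singleton] at hx
  rcases hx with ⟨i, -, -, rfl⟩ | rfl
  · exact Or.inr ⟨i, rfl⟩
  · exact Or.inl rfl

end Multiset

lemma Finset.exists_apply_notMem_of_card_le {α ι : Type*} [Fintype ι] [DecidableEq α]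
    {f : ι → α} (hf : Injective f) {C : Finset α} {o : α} (ho : o ∈ C) (hfo : ∀ i, f i ≠ o)
    (hC : #C ≤ Fintype.card ι) : ∃ i, f i ∉ C := by
  by_contra! hfC
  have hsub : univ.map ⟨f, hf⟩ ⊆ C.erase o := fun x hx => by
    obtain ⟨i, -, rfl⟩ := mem_map.1 hx
    exact mem_erase.2 ⟨hfo i, hfC i⟩
  have := card_le_card hsub
  rw [card_map, card_univ, card_erase_of_mem ho] at this
  have : 0 < #C := card_pos.2 ⟨o, ho⟩
  omega

namespace EuclideanSpace

variable {ι : Type*} [Fintype ι] [DecidableEq ι]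

lemma norm_single_sub_single_sq {i j : ι} (hij : i ≠ j) :
    ‖single i (1 : ℝ) - single j 1‖ ^ 2 = 2 := by
  rw [norm_sub_sq_real, inner_single_left, PiLp.single_apply, if_neg hij]
  norm_num

lemma norm_single_sub_barycenter_sq (i : ι) :
    ‖single i (1 : ℝ) - (EuclideanSpace.equiv ι ℝ).symm (fun _ => 1 / Fintype.card ι)‖ ^ 2 =
      1 - 1 / Fintype.card ι := by
  have hn : (0 : ℝ) < Fintype.card ι := Nat.cast_pos.2 (Fintype.card_pos_iff.2 ⟨i⟩)
  have hconst : ‖(EuclideanSpace.equiv ι ℝ).symm (fun _ => 1 / Fintype.card ι)‖ ^ 2 =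
      1 / Fintype.card ι := by
    rw [EuclideanSpace.norm_eq, Real.sq_sqrt (by positivity)]
    simp only [one_div, PiLp.continuousLinearEquiv_symm_apply, norm_inv, RCLike.norm_natCast,
      inv_pow, sum_const, card_univ, nsmul_eq_mul]
    field_simp
  rw [norm_sub_sq_real, inner_single_left, hconst]
  simp only [PiLp.norm_single, norm_one, one_pow, Real.ringHom_apply, one_div,
    PiLp.continuousLinearEquiv_symm_apply, one_mul]
  field_simp
  ring

lemma single_ne_barycenter (hι : 1 < Fintype.card ι) (i : ι) :
    single i (1 : ℝ) ≠ (EuclideanSpace.equiv ι ℝ).symm (fun _ => 1 / Fintype.card ι) := by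
  intro h
  have hn := norm_single_sub_barycenter_sq i
  rw [h, sub_self, norm_zero, zero_pow two_ne_zero, eq_comm, sub_eq_zero, eq_comm,
    div_eq_one_iff_eq (by positivity)] at hn
  exact hι.ne (by exact_mod_cast hn)

end EuclideanSpace

open Classical in
theorem lower_bound_instance_center_at_o (k : ℕ) (hk : 2 ≤ k)
    (X : Multiset (EuclideanSpace ℝ (Fin k)))
    (hX : X = (((Finset.univ : Finset (Fin k)).val.bind fun i : Fin k =>
        Multiset.replicate (if (i : ℕ) = k - 1 then k - 1 else k)
          (EuclideanSpace.single i (1 : ℝ))) +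
      {((EuclideanSpace.equiv (Fin k) ℝ).symm fun _ => 1 / (k : ℝ))}))
    (C : Finset (EuclideanSpace ℝ (Fin k))) (hC : C.Nonempty)
    (hCX : C ⊆ X.toFinset) (hCcard : C.card = k)
    (hoC : ((EuclideanSpace.equiv (Fin k) ℝ).symm fun _ => 1 / (k : ℝ)) ∈ C) :
    ((k : ℝ) - 1) ^ 2 / k ≤
      (X.map (fun x => C.inf' hC fun c => ‖x - c‖ ^ 2)).sum := by
  set e : Fin k → EuclideanSpace ℝ (Fin k) := fun i => EuclideanSpace.single i 1
  set o : EuclideanSpace ℝ (Fin k) := (EuclideanSpace.equiv (Fin k) ℝ).symm fun _ => 1 / (k : ℝ)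
  have he_o : ∀ i, ‖e i - o‖ ^ 2 = 1 - 1 / k := fun i => by
    simpa only [Fintype.card_fin] using EuclideanSpace.norm_single_sub_barycenter_sq i
  have hne_o : ∀ i, e i ≠ o := fun i => by
    simpa only [Fintype.card_fin] using EuclideanSpace.single_ne_barycenter (by simp; omega) i
  obtain ⟨j, hj⟩ := exists_apply_notMem_of_card_le
    EuclideanSpace.orthonormal_single.linearIndependent.injective hoC hne_o (by simp [hCcard])
  have hcost : ∀ c ∈ C, 1 - 1 / (k : ℝ) ≤ ‖e j - c‖ ^ 2 := by
    intro c hc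
    rcases Multiset.eq_or_exists_eq_of_mem_bind_replicate_add_singleton
      (hX ▸ Multiset.mem_toFinset.1 (hCX hc)) with rfl | ⟨i, rfl⟩
    · exact (he_o j).ge
    · rw [EuclideanSpace.norm_single_sub_single_sq fun hji => hj (by rwa [hji])]
      have : 0 ≤ (1 : ℝ) / k := by positivity
      linarith
  have hrep : Multiset.replicate (k - 1) (e j) ≤ X := by
    rw [hX]
    refine le_trans ?_ ((Multiset.le_bind _ (mem_univ j)).trans (Multiset.le_add_right _ _))
    exact (Multiset.replicate_le_replicate _).2 (by split <;> omega)
  calc ((k : ℝ) - 1) ^ 2 / k = (k - 1 : ℕ) • (1 - 1 / (k : ℝ)) := by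
        rw [nsmul_eq_mul, Nat.cast_sub (by omega)]
        field_simp
        ring
    _ ≤ (k - 1 : ℕ) • C.inf' hC fun c => ‖e j - c‖ ^ 2 := by
        gcongr
        exact le_inf' hC _ hcost
    _ ≤ _ := Multiset.nsmul_le_sum_map_of_replicate_le
        (f := fun x => C.inf' hC fun c => ‖x - c‖ ^ 2) hrep fun x _ =>
          le_inf' hC _ fun c _ => by positivity
end
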